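/- Let A be a ring of subsets of Ω, let μ : A → [0,+∞) be a non-atomic pre-measure whose induced outer measure μ̄ satisfies μ̄(Ω) < +∞, let C_μ be the Caratheodory σ-algebra of μ̄, and let ν : P(Ω) → [0,+∞) be a finitely additive measure defined on all subsets of Ω such that ν(C) = μ̄(C) for every C ∈ C_μ and ν(X) ≤ μ̄(X) for every X ⊆ Ω. Then the following three statements are equivalent: (1) for every X ∉ C_μ, both ν(X) < μ̄(X) and ν(Xᶜ) < μ̄(Xᶜ); (2) for every X ⊆ Ω, ν(X) = μ̄(X) if and only if ν(Xᶜ) = μ̄(Xᶜ); (3) for every X ⊆ Ω, ν(X) = 0 if and only if μ̄(X) = 0. -/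

import Mathlib

open scoped ENNReal

/-- ξ is infinitesimal w.r.t. the embedding ι : ℝ → F. -/
def Infinitesimal {F : Type*} [Field F] [LinearOrder F] [IsStrictOrderedRing F] (ι : ℝ →+*o F) (ξ : F) : Prop :=
  ∀ k : ℕ, 0 < k → -ι (1 / k) < ξ ∧ ξ < ι (1 / k)

/-- ξ is a finite element of F w.r.t. the embedding ι : ℝ → F. -/
def IsFiniteElem {F : Type*} [Field F] [LinearOrder F] [IsStrictOrderedRing F] (ι : ℝ →+*o F) (ξ : F) : Prop :=
  ∃ k : ℤ, -ι k < ξ ∧ ξ < ι k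

-- The shadow (standard part) of ξ, valued in [0,+∞]: the unique real r with
-- ξ - ι r infinitesimal if it exists (converted via `ENNReal.ofReal`), and +∞ otherwise.
open scoped Classical in
noncomputable def sh {F : Type*} [Field F] [LinearOrder F] [IsStrictOrderedRing F] (ι : ℝ →+*o F) (ξ : F) : ℝ≥0∞ :=
  if h : ∃ r : ℝ, Infinitesimal ι (ξ - ι r) then ENNReal.ofReal h.choose else ⊤

/-- A ring of sets over Ω: a nonempty family closed under finite unions,
finite intersections and relative complements. -/
structure IsRingOfSets {Ω : Type*} (𝒜 : Set (Set Ω)) : Prop where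
  nonempty : 𝒜.Nonempty
  union_mem : ∀ A ∈ 𝒜, ∀ B ∈ 𝒜, A ∪ B ∈ 𝒜
  inter_mem : ∀ A ∈ 𝒜, ∀ B ∈ 𝒜, A ∩ B ∈ 𝒜
  diff_mem : ∀ A ∈ 𝒜, ∀ B ∈ 𝒜, A \ B ∈ 𝒜

/-- The outer measure induced by μ : 𝒜 → [0,+∞]: the infimum of Σₙ μ(Aₙ) over all
countable covers of X by sets of 𝒜 (the infimum of the empty family being +∞). -/
noncomputable def outerOf {Ω : Type*} (𝒜 : Set (Set Ω)) (μ : Set Ω → ℝ≥0∞) (X : Set Ω) :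
    ℝ≥0∞ :=
  ⨅ (f : ℕ → Set Ω) (_ : ∀ i, f i ∈ 𝒜) (_ : X ⊆ ⋃ i, f i), ∑' i, μ (f i)

/-- The Caratheodory σ-algebra associated to the outer measure induced by μ. -/
def carathOf {Ω : Type*} (𝒜 : Set (Set Ω)) (μ : Set Ω → ℝ≥0∞) : Set (Set Ω) :=
  {X | ∀ Y : Set Ω, outerOf 𝒜 μ Y = outerOf 𝒜 μ (Y ∩ X) + outerOf 𝒜 μ (Y \ X)}

/-!
Carathéodory's construction turns μ̄ into a complete finite measure ρ on C_μ whose value on an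
arbitrary set is μ̄, so ν is a finitely additive function with ν = ρ on measurable sets and
ν ≤ ρ everywhere. Each of (1), (2), (3) is then equivalent to: ν(X) = ρ(X) only for measurable X.
For (2), exactness on X and Xᶜ gives ρ(X) + ρ(Xᶜ) = ρ(Ω); measurable hulls of X and Xᶜ then meet
in a null set containing hull(X) \ X, which is measurable by completeness. For (3), exactness
on X makes ν vanish on hull(X) \ X, hence so does ρ, and again X is measurable.
-/

open MeasureTheory Set

lemma MeasureTheory.OuterMeasure.isCaratheodory_of_null {α : Type*} (m : OuterMeasure α)
    {s : Set α} (hs : m s = 0) : m.IsCaratheodory s := by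
  refine (m.isCaratheodory_iff_le').2 fun t => ?_
  rw [measure_mono_null inter_subset_right hs, zero_add]
  exact measure_mono sdiff_subset

lemma MeasureTheory.AddContent.isComplete_measureCaratheodory {α : Type*} {C : Set (Set α)}
    (m : AddContent ℝ≥0∞ C) (hC : IsSetSemiring C) (hm : m.IsSigmaSubadditive) :
    (m.measureCaratheodory hC hm).IsComplete :=
  ⟨fun _ hs => OuterMeasure.isCaratheodory_of_null _ hs⟩

section RingOfSets

variable {Ω : Type*} {𝒜 : Set (Set Ω)} {μ : Set Ω → ℝ≥0∞}

lemma IsRingOfSets.isSetRing (h𝒜 : IsRingOfSets 𝒜) : IsSetRing 𝒜 where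
  empty_mem := by
    obtain ⟨A, hA⟩ := h𝒜.nonempty
    simpa using h𝒜.diff_mem A hA A hA
  union_mem _ _ hs ht := h𝒜.union_mem _ hs _ ht
  sdiff_mem _ _ hs ht := h𝒜.diff_mem _ hs _ ht

lemma union_eq_add_of_iUnion_eq_tsum (hempty : ∅ ∈ 𝒜) (hμ0 : μ ∅ = 0)
    (hσ : ∀ f : ℕ → Set Ω, (∀ i, f i ∈ 𝒜) → Pairwise (Function.onFun Disjoint f) →
      (⋃ i, f i) ∈ 𝒜 → μ (⋃ i, f i) = ∑' i, μ (f i))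
    {A B : Set Ω} (hA : A ∈ 𝒜) (hB : B ∈ 𝒜) (hAB : A ∪ B ∈ 𝒜) (hd : Disjoint A B) :
    μ (A ∪ B) = μ A + μ B := by
  let f : ℕ → Set Ω := fun | 0 => A | 1 => B | _ => ∅
  have hf : ⋃ i, f i = A ∪ B := by
    rw [← union_iUnion_nat_succ, ← union_iUnion_nat_succ]
    simp [f]
  have hdisj : Pairwise (Function.onFun Disjoint f) := by
    rintro (_ | _ | i) (_ | _ | j) hij <;> simp_all [Function.onFun, f, hd.symm]
  have := hσ f (by rintro (_ | _ | i) <;> assumption) hdisj (hf ▸ hAB)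
  rw [hf, tsum_eq_sum (s := Finset.range 2) (fun i hi => ?_)] at this
  · simpa [Finset.sum_range_succ, f] using this
  · rcases i with _ | _ | i <;> simp_all [f]

noncomputable def IsRingOfSets.addContent (h𝒜 : IsRingOfSets 𝒜) (hμ0 : μ ∅ = 0)
    (hσ : ∀ f : ℕ → Set Ω, (∀ i, f i ∈ 𝒜) → Pairwise (Function.onFun Disjoint f) →
      (⋃ i, f i) ∈ 𝒜 → μ (⋃ i, f i) = ∑' i, μ (f i)) : AddContent ℝ≥0∞ 𝒜 :=
  h𝒜.isSetRing.addContent_of_union μ hμ0 fun hA hB hd =>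
    union_eq_add_of_iUnion_eq_tsum h𝒜.isSetRing.empty_mem hμ0 hσ hA hB
      (h𝒜.isSetRing.union_mem hA hB) hd

lemma outerOf_eq_inducedOuterMeasure (hempty : ∅ ∈ 𝒜) (hμ0 : μ ∅ = 0) :
    outerOf 𝒜 μ = ⇑(inducedOuterMeasure (fun s (_ : s ∈ 𝒜) => μ s) hempty hμ0) := by
  funext X
  rw [inducedOuterMeasure, OuterMeasure.ofFunction_eq_iInf_mem (P := (· ∈ 𝒜)) _ _
    fun s hs => extend_eq_top _ hs]
  exact iInf_congr fun f => iInf_congr fun hf => iInf_congr fun _ =>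
    tsum_congr fun i => (extend_eq (fun s (_ : s ∈ 𝒜) => μ s) (hf i)).symm

theorem exists_isComplete_measure_eq_outerOf (h𝒜 : IsRingOfSets 𝒜) (hμ0 : μ ∅ = 0)
    (hσ : ∀ f : ℕ → Set Ω, (∀ i, f i ∈ 𝒜) → Pairwise (Function.onFun Disjoint f) →
      (⋃ i, f i) ∈ 𝒜 → μ (⋃ i, f i) = ∑' i, μ (f i)) :
    ∃ (_ : MeasurableSpace Ω) (ρ : Measure Ω), ρ.IsComplete ∧
      (∀ X, MeasurableSet X ↔ X ∈ carathOf 𝒜 μ) ∧ ∀ X, ρ X = outerOf 𝒜 μ X := by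
  have hR := h𝒜.isSetRing
  set m := h𝒜.addContent hμ0 hσ
  have hm : m.IsSigmaSubadditive :=
    isSigmaSubadditive_of_addContent_iUnion_eq_tsum hR fun f hf hU hd => hσ f hf hd hU
  have hO := outerOf_eq_inducedOuterMeasure hR.empty_mem hμ0
  refine ⟨_, m.measureCaratheodory hR.isSetSemiring hm,
    m.isComplete_measureCaratheodory hR.isSetSemiring hm, fun X => ?_, fun X => ?_⟩
  · simp only [carathOf, mem_ofPred_eq, hO]
    rfl
  · rw [hO]
    rfl

end RingOfSets

section DominatedExtension

variable {Ω : Type*} [MeasurableSpace Ω] {ρ : Measure Ω}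

lemma measurableSet_of_measure_add_measure_compl [IsFiniteMeasure ρ] [ρ.IsComplete] {X : Set Ω}
    (h : ρ X + ρ Xᶜ = ρ univ) : MeasurableSet X := by
  set H := toMeasurable ρ X
  set K := toMeasurable ρ Xᶜ
  have hHK : H ∪ K = univ :=
    univ_subset_iff.1 <| (union_compl_self X).symm.subset.trans <|
      union_subset_union (subset_toMeasurable ρ X) (subset_toMeasurable ρ Xᶜ)
  have hHK_null : ρ (H ∩ K) = 0 := by
    have := measure_union_add_inter (μ := ρ) H (measurableSet_toMeasurable ρ Xᶜ)
    rw [hHK, measure_toMeasurable, measure_toMeasurable, h] at this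
    exact (ENNReal.add_right_inj (measure_ne_top ρ univ)).1 (this.trans (add_zero _).symm)
  have hnull : ρ (H \ X) = 0 :=
    measure_mono_null (inter_subset_inter_right H (subset_toMeasurable ρ Xᶜ)) hHK_null
  rw [← sdiff_sdiff_cancel_left (subset_toMeasurable ρ X)]
  exact (measurableSet_toMeasurable ρ X).diff (measurableSet_of_null (μ := ρ) hnull)

structure IsDominatedAdditiveExtension (ν : Set Ω → ℝ≥0∞) (ρ : Measure Ω) : Prop where
  union_eq : ∀ A B : Set Ω, Disjoint A B → ν (A ∪ B) = ν A + ν B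
  eq_of_measurableSet : ∀ C, MeasurableSet C → ν C = ρ C
  le : ∀ X, ν X ≤ ρ X

namespace IsDominatedAdditiveExtension

variable {ν : Set Ω → ℝ≥0∞}

lemma add_compl (hν : IsDominatedAdditiveExtension ν ρ) (X : Set Ω) : ν X + ν Xᶜ = ρ univ := by
  rw [← hν.union_eq X Xᶜ disjoint_compl_right, union_compl_self,
    hν.eq_of_measurableSet univ MeasurableSet.univ]

lemma ne_top [IsFiniteMeasure ρ] (hν : IsDominatedAdditiveExtension ν ρ) (X : Set Ω) : ν X ≠ ⊤ :=
  ne_top_of_le_ne_top (measure_ne_top ρ X) (hν.le X)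

lemma forall_lt_iff (hν : IsDominatedAdditiveExtension ν ρ) :
    (∀ X : Set Ω, ¬MeasurableSet X → ν X < ρ X ∧ ν Xᶜ < ρ Xᶜ) ↔
      ∀ X : Set Ω, ν X = ρ X → MeasurableSet X := by
  refine ⟨fun h X hX => by_contra fun hm => (h X hm).1.ne hX, fun h X hm => ?_⟩
  exact ⟨(hν.le X).lt_of_ne (mt (h X) hm), (hν.le Xᶜ).lt_of_ne fun hc => hm (h Xᶜ hc).of_compl⟩

lemma forall_eq_iff_compl_eq_iff [IsFiniteMeasure ρ] [ρ.IsComplete]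
    (hν : IsDominatedAdditiveExtension ν ρ) :
    (∀ X : Set Ω, ν X = ρ X ↔ ν Xᶜ = ρ Xᶜ) ↔ ∀ X : Set Ω, ν X = ρ X → MeasurableSet X := by
  refine ⟨fun h X hX => ?_, fun h X => ?_⟩
  · refine measurableSet_of_measure_add_measure_compl (ρ := ρ) ?_
    rw [← hX, ← (h X).1 hX, hν.add_compl]
  · exact ⟨fun hX => hν.eq_of_measurableSet _ (h X hX).compl,
      fun hX => hν.eq_of_measurableSet _ (h Xᶜ hX).of_compl⟩

lemma forall_eq_zero_iff [IsFiniteMeasure ρ] [ρ.IsComplete]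
    (hν : IsDominatedAdditiveExtension ν ρ) :
    (∀ X : Set Ω, ν X = 0 ↔ ρ X = 0) ↔ ∀ X : Set Ω, ν X = ρ X → MeasurableSet X := by
  refine ⟨fun h X hX => ?_, fun h X => ⟨fun hX => ?_, fun hX => ?_⟩⟩
  · have hXH := subset_toMeasurable ρ X
    have hH := measurableSet_toMeasurable ρ X
    have hν_diff : ν (toMeasurable ρ X \ X) = 0 := by
      refine (ENNReal.add_right_inj (hν.ne_top X)).1 ?_
      rw [add_zero, ← hν.union_eq X _ disjoint_sdiff_right, union_sdiff_cancel hXH,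
        hν.eq_of_measurableSet _ hH, measure_toMeasurable, hX]
    rw [← sdiff_sdiff_cancel_left hXH]
    exact hH.diff (measurableSet_of_null (μ := ρ) ((h _).1 hν_diff))
  · have hXc : ν Xᶜ = ρ Xᶜ := by
      refine le_antisymm (hν.le Xᶜ) ?_
      rw [← zero_add (ν Xᶜ), ← hX, hν.add_compl]
      exact measure_mono (subset_univ _)
    rw [← hν.eq_of_measurableSet X (h Xᶜ hXc).of_compl, hX]
  · exact le_antisymm ((hν.le X).trans hX.le) zero_le

end IsDominatedAdditiveExtension

end DominatedExtension

theorem stmt5_general {Ω : Type*} (𝒜 : Set (Set Ω)) (h𝒜 : IsRingOfSets 𝒜)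
    (μ : Set Ω → ℝ≥0∞) (hμ0 : μ ∅ = 0)
    (hσ : ∀ f : ℕ → Set Ω, (∀ i, f i ∈ 𝒜) → Pairwise (Function.onFun Disjoint f) →
      (⋃ i, f i) ∈ 𝒜 → μ (⋃ i, f i) = ∑' i, μ (f i))
    (hΩfin : outerOf 𝒜 μ Set.univ < ⊤)
    (ν : Set Ω → ℝ≥0∞)
    (hνadd : ∀ A B : Set Ω, Disjoint A B → ν (A ∪ B) = ν A + ν B)
    (hνC : ∀ C ∈ carathOf 𝒜 μ, ν C = outerOf 𝒜 μ C)
    (hνle : ∀ X : Set Ω, ν X ≤ outerOf 𝒜 μ X) :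
    ((∀ X : Set Ω, X ∉ carathOf 𝒜 μ →
        ν X < outerOf 𝒜 μ X ∧ ν Xᶜ < outerOf 𝒜 μ Xᶜ) ↔
      (∀ X : Set Ω, ν X = outerOf 𝒜 μ X ↔ ν Xᶜ = outerOf 𝒜 μ Xᶜ)) ∧
    ((∀ X : Set Ω, ν X = outerOf 𝒜 μ X ↔ ν Xᶜ = outerOf 𝒜 μ Xᶜ) ↔
      (∀ X : Set Ω, ν X = 0 ↔ outerOf 𝒜 μ X = 0)) := by
  obtain ⟨_, ρ, _, hmeas, hρ⟩ := exists_isComplete_measure_eq_outerOf h𝒜 hμ0 hσ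
  have : IsFiniteMeasure ρ := ⟨(hρ univ).trans_lt hΩfin⟩
  have hν : IsDominatedAdditiveExtension ν ρ :=
    ⟨hνadd, fun C hC => (hνC C ((hmeas C).1 hC)).trans (hρ C).symm,
      fun X => (hνle X).trans_eq (hρ X).symm⟩
  simp only [← hρ, ← hmeas]
  exact ⟨hν.forall_lt_iff.trans hν.forall_eq_iff_compl_eq_iff.symm,
    hν.forall_eq_iff_compl_eq_iff.trans hν.forall_eq_zero_iff.symm⟩

/-- Let μ be a non-atomic finite-valued pre-measure on a ring 𝒜 over Ω with
μ̄(Ω) < +∞, and let ν be a finitely additive measure on all subsets of Ω, with finite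
values, agreeing with the outer measure μ̄ on the Caratheodory σ-algebra C_μ and with
ν ≤ μ̄ everywhere. Then the following are equivalent:
(1) every X ∉ C_μ satisfies ν(X) < μ̄(X) and ν(Xᶜ) < μ̄(Xᶜ);
(2) ν(X) = μ̄(X) iff ν(Xᶜ) = μ̄(Xᶜ);
(3) ν(X) = 0 iff μ̄(X) = 0. -/
theorem stmt5 {Ω : Type*} [Nonempty Ω] (𝒜 : Set (Set Ω)) (h𝒜 : IsRingOfSets 𝒜)
    (μ : Set Ω → ℝ≥0∞) (hμfin : ∀ A ∈ 𝒜, μ A ≠ ⊤) (hμ0 : μ ∅ = 0)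
    (hσ : ∀ f : ℕ → Set Ω, (∀ i, f i ∈ 𝒜) → Pairwise (Function.onFun Disjoint f) →
      (⋃ i, f i) ∈ 𝒜 → μ (⋃ i, f i) = ∑' i, μ (f i))
    (hna : ∀ A ∈ 𝒜, A.Finite → μ A = 0)
    (hΩfin : outerOf 𝒜 μ Set.univ < ⊤)
    (ν : Set Ω → ℝ≥0∞) (hνfin : ∀ X : Set Ω, ν X ≠ ⊤) (hν0 : ν ∅ = 0)
    (hνadd : ∀ A B : Set Ω, Disjoint A B → ν (A ∪ B) = ν A + ν B)
    (hνC : ∀ C ∈ carathOf 𝒜 μ, ν C = outerOf 𝒜 μ C)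
    (hνle : ∀ X : Set Ω, ν X ≤ outerOf 𝒜 μ X) :
    ((∀ X : Set Ω, X ∉ carathOf 𝒜 μ →
        ν X < outerOf 𝒜 μ X ∧ ν Xᶜ < outerOf 𝒜 μ Xᶜ) ↔
      (∀ X : Set Ω, ν X = outerOf 𝒜 μ X ↔ ν Xᶜ = outerOf 𝒜 μ Xᶜ)) ∧
    ((∀ X : Set Ω, ν X = outerOf 𝒜 μ X ↔ ν Xᶜ = outerOf 𝒜 μ Xᶜ) ↔
      (∀ X : Set Ω, ν X = 0 ↔ outerOf 𝒜 μ X = 0)) :=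
  stmt5_general 𝒜 h𝒜 μ hμ0 hσ hΩfin ν hνadd hνC hνle
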